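/- arXiv:math/0209174 — 2 statements merged into one kernel-verified Lean document; each statement's English description precedes it below -/
import Mathlib

section
/- Let R be a commutative Noetherian ring of prime characteristic p with the following property: for each minimal prime P of R, the quotient ring R/P admits a module-finite integral extension domain S in which tight closure commutes with localization. Then tight closure commutes with localization in R; that is, for every ideal I of R and every multiplicative set U of R, the extension I*·R[U⁻¹] of the tight closure of I equals the tight closure (I·R[U⁻¹])* of the extended ideal. -/
/-- The `q`-th Frobenius power `I^{[q]}` of an ideal `I`: the ideal generated by
`q`-th powers of elements of `I`. -/
def Ideal.frobeniusPower {R : Type*} [CommRing R] (I : Ideal R) (q : ℕ) : Ideal R :=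
  Ideal.span ((fun x => x ^ q) '' (I : Set R))

/-- `R°`: the set of elements of `R` not contained in any minimal prime of `R`. -/
def primeComplement (R : Type*) [CommRing R] : Set R :=
  { c | ∀ P ∈ minimalPrimes R, c ∉ P }

/-- The tight closure `I*` of an ideal `I` in a ring of characteristic `p`:
elements `z` such that `c * z ^ (p ^ e) ∈ I ^ [p ^ e]` for some `c ∈ R°`
and all sufficiently large `e`. -/
def tightClosure (p : ℕ) {R : Type*} [CommRing R] (I : Ideal R) : Set R :=
  { z | ∃ c ∈ primeComplement R, ∃ N : ℕ, ∀ e : ℕ, N ≤ e →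
      c * z ^ p ^ e ∈ I.frobeniusPower (p ^ e) }

/-- Tight closure commutes with localization in `R`: for every ideal `I` and
multiplicative set `U`, `I* · R[U⁻¹] = (I · R[U⁻¹])*`. -/
def TightClosureCommutesWithLocalization (p : ℕ) (R : Type*) [CommRing R] : Prop :=
  ∀ (I : Ideal R) (U : Submonoid R),
    (Ideal.map (algebraMap R (Localization U)) (Ideal.span (tightClosure p I)) :
        Set (Localization U))
      = tightClosure p (Ideal.map (algebraMap R (Localization U)) I)

/-- A ring is F-regular if every ideal is tightly closed, both in the ring itself
and in all of its localizations. -/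
def FRegular (p : ℕ) (S : Type*) [CommRing S] : Prop :=
  (∀ I : Ideal S, tightClosure p I = (I : Set S)) ∧
    ∀ (U : Submonoid S) (J : Ideal (Localization U)),
      tightClosure p J = (J : Set (Localization U))

/-!
An element `y` lies in `I*` as soon as its image in `R/P` lies in `(I·R/P)*` for every minimal
prime `P`: prime avoidance combines the test elements of the `R/P` into one test element of `R`,
at the cost of an error term in the nilradical, which a further Frobenius power kills.
So for `x/1 ∈ (I·R[U⁻¹])*` it suffices to find, for each `P`, some `v ∈ U` with
`vx ∈ (I·R/P)*`. This is trivial if `U` meets `P`. Otherwise `x/1` persists to `S[U⁻¹]`,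
where `S` is the given extension of `R/P`; the hypothesis on `S` yields `v ∈ U` with
`vx ∈ (IS)*`, and tight closure descends from `S` to `R/P` through an `R/P`-linear map
`S → R/P` that does not vanish at `1`.
-/

open Ideal

variable {A B : Type*} [CommRing A] [CommRing B] {p : ℕ}

-- Characteristic `p` is written `(p : A) = 0` rather than `CharP A p`: a localization of a ring
-- of characteristic `p` may be the zero ring.
theorem add_pow_prime_pow_of_natCast_eq_zero (hp : p.Prime) (hA : (p : A) = 0) (x y : A)
    (e : ℕ) : (x + y) ^ p ^ e = x ^ p ^ e + y ^ p ^ e := by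
  rw [add_pow_prime_pow_eq' hp, hA, zero_mul, add_zero]

namespace Ideal

theorem pow_mem_frobeniusPower {I : Ideal A} {x : A} (hx : x ∈ I) (q : ℕ) :
    x ^ q ∈ I.frobeniusPower q :=
  subset_span ⟨x, hx, rfl⟩

theorem frobeniusPower_le_pow (I : Ideal A) (q : ℕ) : I.frobeniusPower q ≤ I ^ q :=
  span_le.2 <| by rintro _ ⟨x, hx, rfl⟩; exact pow_mem_pow hx q

theorem map_frobeniusPower_le (f : A →+* B) (I : Ideal A) (q : ℕ) :
    (I.frobeniusPower q).map f ≤ (I.map f).frobeniusPower q := by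
  rw [frobeniusPower, map_span, span_le]
  rintro _ ⟨_, ⟨x, hx, rfl⟩, rfl⟩
  rw [map_pow]
  exact pow_mem_frobeniusPower (mem_map_of_mem f hx) q

theorem frobeniusPower_span (hp : p.Prime) (hA : (p : A) = 0) (T : Set A) (e : ℕ) :
    (span T).frobeniusPower (p ^ e) = span ((· ^ p ^ e) '' T) := by
  refine le_antisymm (span_le.2 ?_) (span_mono (Set.image_mono subset_span))
  rintro _ ⟨x, hx, rfl⟩
  induction hx using Submodule.span_induction with
  | mem x hx => exact subset_span ⟨x, hx, rfl⟩
  | zero => simp [zero_pow (pow_ne_zero e hp.ne_zero)]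
  | add x y _ _ hx hy =>
    simpa only [SetLike.mem_coe, add_pow_prime_pow_of_natCast_eq_zero hp hA] using add_mem hx hy
  | smul a x _ hx => simpa only [SetLike.mem_coe, smul_eq_mul, mul_pow] using mul_mem_left _ _ hx

theorem frobeniusPower_sup (hp : p.Prime) (hA : (p : A) = 0) (I J : Ideal A) (e : ℕ) :
    (I ⊔ J).frobeniusPower (p ^ e) = I.frobeniusPower (p ^ e) ⊔ J.frobeniusPower (p ^ e) := by
  rw [← span_eq I, ← span_eq J, ← span_union, frobeniusPower_span hp hA, span_eq, span_eq,
    Set.image_union, span_union, frobeniusPower, frobeniusPower]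

theorem frobeniusPower_frobeniusPower (hp : p.Prime) (hA : (p : A) = 0) (I : Ideal A)
    (a b : ℕ) :
    (I.frobeniusPower (p ^ a)).frobeniusPower (p ^ b) = I.frobeniusPower (p ^ (a + b)) := by
  rw [frobeniusPower.eq_1 I, frobeniusPower_span hp hA, Set.image_image, frobeniusPower]
  simp only [← pow_mul, ← pow_add]

theorem map_frobeniusPower (hp : p.Prime) (hB : (p : B) = 0) (f : A →+* B) (I : Ideal A)
    (e : ℕ) :
    (I.map f).frobeniusPower (p ^ e) = (I.frobeniusPower (p ^ e)).map f := by
  rw [map, frobeniusPower_span hp hB, frobeniusPower, map_span, Set.image_image, Set.image_image]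
  simp only [map_pow]

end Ideal

theorem one_mem_primeComplement : (1 : A) ∈ primeComplement A :=
  fun _ hP => hP.1.1.one_notMem

theorem mul_mem_primeComplement {c d : A} (hc : c ∈ primeComplement A)
    (hd : d ∈ primeComplement A) : c * d ∈ primeComplement A :=
  fun P hP hcd => (hP.1.1.mem_or_mem hcd).elim (hc P hP) (hd P hP)

theorem pow_mem_primeComplement {c : A} (hc : c ∈ primeComplement A) (n : ℕ) :
    c ^ n ∈ primeComplement A := by
  induction n with
  | zero => simpa using one_mem_primeComplement
  | succ n ih => simpa only [pow_succ] using mul_mem_primeComplement ih hc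

theorem mem_primeComplement_iff_ne_zero [IsDomain A] {c : A} :
    c ∈ primeComplement A ↔ c ≠ 0 := by
  simp [primeComplement, IsDomain.minimalPrimes_eq_singleton_bot]

theorem zero_mem_tightClosure (hp : p.Prime) (I : Ideal A) : (0 : A) ∈ tightClosure p I :=
  ⟨1, one_mem_primeComplement, 0, fun e _ => by simp [zero_pow (pow_ne_zero e hp.ne_zero)]⟩

theorem add_mem_tightClosure (hp : p.Prime) (hA : (p : A) = 0) {I : Ideal A} {z w : A}
    (hz : z ∈ tightClosure p I) (hw : w ∈ tightClosure p I) : z + w ∈ tightClosure p I := by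
  obtain ⟨c, hc, N, hN⟩ := hz
  obtain ⟨d, hd, M, hM⟩ := hw
  refine ⟨c * d, mul_mem_primeComplement hc hd, max N M, fun e he => ?_⟩
  have hsplit : c * d * (z + w) ^ p ^ e = d * (c * z ^ p ^ e) + c * (d * w ^ p ^ e) := by
    rw [add_pow_prime_pow_of_natCast_eq_zero hp hA]; ring
  rw [hsplit]
  exact add_mem (mul_mem_left _ _ (hN e (le_of_max_le_left he)))
    (mul_mem_left _ _ (hM e (le_of_max_le_right he)))

theorem mul_mem_tightClosure {I : Ideal A} {z : A} (r : A) (hz : z ∈ tightClosure p I) :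
    r * z ∈ tightClosure p I := by
  obtain ⟨c, hc, N, hN⟩ := hz
  refine ⟨c, hc, N, fun e he => ?_⟩
  rw [mul_pow, mul_left_comm]
  exact mul_mem_left _ _ (hN e he)

theorem coe_span_tightClosure (hp : p.Prime) (hA : (p : A) = 0) (I : Ideal A) :
    (span (tightClosure p I) : Set A) = tightClosure p I := by
  refine subset_antisymm (fun x hx => ?_) subset_span
  induction hx using Submodule.span_induction with
  | mem x hx => exact hx
  | zero => exact zero_mem_tightClosure hp I
  | add x y _ _ hx hy => exact add_mem_tightClosure hp hA hx hy
  | smul r x _ hx => exact mul_mem_tightClosure r hx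

theorem map_mem_tightClosure (f : A →+* B)
    (hf : ∀ c ∈ primeComplement A, f c ∈ primeComplement B) {I : Ideal A} {z : A}
    (hz : z ∈ tightClosure p I) : f z ∈ tightClosure p (I.map f) := by
  obtain ⟨c, hc, N, hN⟩ := hz
  refine ⟨f c, hf c hc, N, fun e he => ?_⟩
  rw [← map_pow, ← map_mul]
  exact map_frobeniusPower_le f I _ (mem_map_of_mem f (hN e he))

theorem exists_mul_mem_sup_of_mk_mem_tightClosure (hp : p.Prime) (hA : (p : A) = 0)
    {P : Ideal A} [P.IsPrime] {I : Ideal A} {y : A}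
    (hy : Ideal.Quotient.mk P y ∈ tightClosure p (I.map (Ideal.Quotient.mk P))) :
    ∃ c ∉ P, ∃ N : ℕ, ∀ e, N ≤ e →
      c * y ^ p ^ e ∈ I.frobeniusPower (p ^ e) ⊔ P := by
  obtain ⟨c', hc', N, hN⟩ := hy
  obtain ⟨c, rfl⟩ := Ideal.Quotient.mk_surjective c'
  rw [mem_primeComplement_iff_ne_zero, ne_eq, Ideal.Quotient.eq_zero_iff_mem] at hc'
  refine ⟨c, hc', N, fun e he => ?_⟩
  have hP : (p : A ⧸ P) = 0 := by rw [← map_natCast (Ideal.Quotient.mk P), hA, map_zero]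
  have h := hN e he
  rwa [map_frobeniusPower hp hP, ← map_pow, ← map_mul, mem_quotient_iff_mem_sup] at h

section MinimalPrimes

theorem mul_mem_nilradical_of_mem_minimalPrimes {P : Ideal A} {d b : A} (hb : b ∈ P)
    (hd : ∀ Q ∈ minimalPrimes A, Q ≠ P → d ∈ Q) : d * b ∈ nilradical A := by
  rw [nilradical, ← sInf_minimalPrimes]
  refine Submodule.mem_sInf.2 fun Q hQ => ?_
  rcases eq_or_ne Q P with rfl | hQP
  · exact mul_mem_left _ _ hb
  · exact mul_mem_right _ _ (hd Q hQ hQP)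

variable [IsNoetherianRing A]

theorem exists_notMem_mem_others_of_mem_minimalPrimes {P : Ideal A} (hP : P ∈ minimalPrimes A) :
    ∃ d ∉ P, ∀ Q ∈ minimalPrimes A, Q ≠ P → d ∈ Q := by
  classical
  set s := (minimalPrimes.finite_of_isNoetherianRing A).toFinset
  have hnle : ¬ (s.erase P).inf id ≤ P := by
    intro hle
    obtain ⟨Q, hQs, hQP⟩ := (hP.1.1.inf_le').1 hle
    have hQ : Q ∈ minimalPrimes A := (Set.Finite.mem_toFinset _).1 (Finset.mem_of_mem_erase hQs)
    exact Finset.ne_of_mem_erase hQs (le_antisymm hQP (hP.2 hQ.1 hQP))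
  obtain ⟨d, hd, hdP⟩ := SetLike.not_le_iff_exists.1 hnle
  refine ⟨d, hdP, fun Q hQ hQP => ?_⟩
  exact Finset.inf_le (f := id) (Finset.mem_erase.2 ⟨hQP, (Set.Finite.mem_toFinset _).2 hQ⟩) hd

theorem mem_tightClosure_of_eventually_mem_sup_nilradical (hp : p.Prime) (hA : (p : A) = 0)
    {I : Ideal A} {y c : A} (hc : c ∈ primeComplement A) {N : ℕ}
    (hN : ∀ e, N ≤ e → c * y ^ p ^ e ∈ I.frobeniusPower (p ^ e) ⊔ nilradical A) :
    y ∈ tightClosure p I := by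
  obtain ⟨m, hm⟩ := IsNoetherianRing.isNilpotent_nilradical A
  have hnil : (nilradical A).frobeniusPower (p ^ m) = ⊥ :=
    le_bot_iff.1 <| calc
      _ ≤ nilradical A ^ p ^ m := frobeniusPower_le_pow _ _
      _ ≤ nilradical A ^ m := pow_le_pow_right (Nat.lt_pow_self hp.one_lt).le
      _ = ⊥ := hm
  refine ⟨c ^ p ^ m, pow_mem_primeComplement hc _, N + m, fun e he => ?_⟩
  obtain ⟨e₀, rfl⟩ := Nat.exists_eq_add_of_le' (le_of_add_le_right he)
  have h := pow_mem_frobeniusPower (hN e₀ (by omega)) (p ^ m)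
  rwa [frobeniusPower_sup hp hA, hnil, sup_bot_eq, frobeniusPower_frobeniusPower hp hA, mul_pow,
    ← pow_mul, ← pow_add] at h

theorem mem_tightClosure_of_forall_minimalPrimes (hp : p.Prime) (hA : (p : A) = 0)
    {I : Ideal A} {y : A}
    (hy : ∀ P ∈ minimalPrimes A,
      Ideal.Quotient.mk P y ∈ tightClosure p (I.map (Ideal.Quotient.mk P))) :
    y ∈ tightClosure p I := by
  classical
  choose! c hcP N hN using fun P (hP : P ∈ minimalPrimes A) =>
    have := hP.1.1; exists_mul_mem_sup_of_mk_mem_tightClosure hp hA (hy P hP)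
  choose! d hdP hdQ using fun P (hP : P ∈ minimalPrimes A) =>
    exists_notMem_mem_others_of_mem_minimalPrimes hP
  set s := (minimalPrimes.finite_of_isNoetherianRing A).toFinset
  have hs : ∀ {P}, P ∈ s ↔ P ∈ minimalPrimes A := Set.Finite.mem_toFinset _
  refine mem_tightClosure_of_eventually_mem_sup_nilradical hp hA (c := ∑ P ∈ s, d P * c P)
    (N := s.sup N) ?_ fun e he => ?_
  · intro Q hQ hcQ
    have hrest : ∑ P ∈ s.erase Q, d P * c P ∈ Q :=
      sum_mem fun P hP => mul_mem_right _ _ <|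
        hdQ P (hs.1 (Finset.mem_of_mem_erase hP)) Q hQ (Finset.ne_of_mem_erase hP).symm
    rw [← Finset.add_sum_erase s _ (hs.2 hQ)] at hcQ
    rcases hQ.1.1.mem_or_mem ((Submodule.add_mem_iff_left _ hrest).1 hcQ) with h | h
    · exact hdP Q hQ h
    · exact hcP Q hQ h
  · rw [Finset.sum_mul]
    refine sum_mem fun P hP => ?_
    obtain ⟨a, ha, b, hb, hab⟩ :=
      Submodule.mem_sup.1 (hN P (hs.1 hP) e ((Finset.le_sup hP).trans he))
    rw [mul_assoc, ← hab, mul_add]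
    exact add_mem (mem_sup_left (mul_mem_left _ _ ha))
      (mem_sup_right (mul_mem_nilradical_of_mem_minimalPrimes hb (hdQ P (hs.1 hP))))

end MinimalPrimes

theorem IsLocalization.mem_minimalPrimes_iff_comap (U : Submonoid A) (L : Type*) [CommRing L]
    [Algebra A L] [IsLocalization U L] {P : Ideal L} :
    P ∈ minimalPrimes L ↔ P.comap (algebraMap A L) ∈ minimalPrimes A := by
  have h := IsLocalization.minimalPrimes_map U L (⊥ : Ideal A)
  rw [Ideal.map_bot] at h
  exact Set.ext_iff.1 h P

theorem algebraMap_mem_primeComplement (U : Submonoid A) (L : Type*) [CommRing L]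
    [Algebra A L] [IsLocalization U L] {c : A} (hc : c ∈ primeComplement A) :
    algebraMap A L c ∈ primeComplement L :=
  fun _ hP => hc _ ((IsLocalization.mem_minimalPrimes_iff_comap U L).1 hP)

theorem coe_map_span_tightClosure_subset (U : Submonoid A) (L : Type*) [CommRing L]
    [Algebra A L] [IsLocalization U L] (hp : p.Prime) (hA : (p : A) = 0) (I : Ideal A) :
    ((span (tightClosure p I)).map (algebraMap A L) : Set L) ⊆
      tightClosure p (I.map (algebraMap A L)) := by
  have hL : (p : L) = 0 := by rw [← map_natCast (algebraMap A L), hA, map_zero]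
  rw [← coe_span_tightClosure hp hL, SetLike.coe_subset_coe, map_le_iff_le_comap, span_le]
  exact fun z hz => subset_span <|
    map_mem_tightClosure _ (fun c hc => algebraMap_mem_primeComplement U L hc) hz

theorem map_mem_primeComplement_of_ker_mem_minimalPrimes [IsDomain B] (ψ : A →+* B)
    (hψ : RingHom.ker ψ ∈ minimalPrimes A) {c : A} (hc : c ∈ primeComplement A) :
    ψ c ∈ primeComplement B :=
  mem_primeComplement_iff_ne_zero.2 fun h0 => hc _ hψ h0

theorem TightClosureCommutesWithLocalization.exists_mul_mem_tightClosure (hp : p.Prime)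
    (hA : (p : A) = 0) (h : TightClosureCommutesWithLocalization p A) (U : Submonoid A)
    {I : Ideal A} {z : A}
    (hz : algebraMap A (Localization U) z ∈
      tightClosure p (I.map (algebraMap A (Localization U)))) :
    ∃ u ∈ U, u * z ∈ tightClosure p I := by
  rw [← h I U, SetLike.mem_coe, IsLocalization.algebraMap_mem_map_algebraMap_iff U] at hz
  simpa only [← SetLike.mem_coe, coe_span_tightClosure hp hA] using hz

-- Take a functional on the `Frac(D)`-vector space `M[(D ∖ 0)⁻¹]` that does not vanish at `x`,
-- then clear the denominators of its values, a finitely generated `D`-submodule of `Frac(D)`.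
open nonZeroDivisors in
theorem Module.exists_dual_apply_ne_zero_of_isTorsionFree {D M : Type*} [CommRing D]
    [IsDomain D] [AddCommGroup M] [Module D M] [Module.Finite D M] [Module.IsTorsionFree D M]
    {x : M} (hx : x ≠ 0) : ∃ φ : Module.Dual D M, φ x ≠ 0 := by
  let K := FractionRing D
  let ι := LocalizedModule.mkLinearMap D⁰ M
  have hιx : ι x ≠ 0 := by
    rw [Ne, IsLocalizedModule.eq_zero_iff D⁰ ι]
    rintro ⟨c, hc⟩
    exact hx ((smul_eq_zero_iff_right (nonZeroDivisors.coe_ne_zero c)).1 hc)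
  obtain ⟨f, hf⟩ := Module.Projective.exists_dual_ne_zero K hιx
  let g : M →ₗ[D] K := f.restrictScalars D ∘ₗ ι
  obtain ⟨a, ha, hint⟩ :=
    FractionalIdeal.isFractional_of_fg (S := D⁰) (Module.Finite.fg_top.map g)
  let j := LinearEquiv.ofInjective (Algebra.linearMap D K) (IsFractionRing.injective D K)
  have hrange : ∀ m, (a • g) m ∈ LinearMap.range (Algebra.linearMap D K) := fun m =>
    hint _ (Submodule.mem_map_of_mem Submodule.mem_top)
  refine ⟨j.symm ∘ₗ (a • g).codRestrict _ hrange, ?_⟩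
  rw [LinearMap.comp_apply, LinearEquiv.coe_coe, LinearEquiv.map_ne_zero_iff, Ne,
    ← Submodule.coe_eq_zero, LinearMap.codRestrict_apply, LinearMap.smul_apply]
  exact smul_ne_zero (nonZeroDivisors.coe_ne_zero ⟨a, ha⟩) hf

theorem LinearMap.apply_mem_of_mem_map_algebraMap {D S : Type*} [CommRing D] [CommRing S]
    [Algebra D S] (φ : S →ₗ[D] D) {J : Ideal D} {s : S} (hs : s ∈ J.map (algebraMap D S)) :
    φ s ∈ J := by
  rw [← Submodule.restrictScalars_mem D, ← smul_top_eq_map] at hs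
  refine (Submodule.smul_le (P := Submodule.comap φ J).2 fun j hj m _ => ?_) hs
  rw [Submodule.mem_comap, map_smul, smul_eq_mul]
  exact mul_mem_right _ _ hj

theorem exists_ne_zero_algebraMap_mem_span_singleton {D S : Type*} [CommRing D] [IsDomain D]
    [CommRing S] [IsDomain S] [Algebra D S] [Algebra.IsIntegral D S] {d : S} (hd : d ≠ 0) :
    ∃ r : D, r ≠ 0 ∧ algebraMap D S r ∈ span {d} := by
  obtain ⟨r, hr, hr0⟩ := Submodule.exists_mem_ne_zero_of_ne_bot <|
    comap_ne_bot_of_integral_mem hd (mem_span_singleton_self d)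
      (Algebra.IsIntegral.isIntegral (R := D) d)
  exact ⟨r, hr0, hr⟩

theorem mem_tightClosure_of_map_mem {D S : Type*} [CommRing D] [IsDomain D] [CommRing S]
    [IsDomain S] (hp : p.Prime) (hS : (p : S) = 0) (f : D →+* S) (hinj : Function.Injective f)
    (hfin : f.Finite) {I : Ideal D} {y : D} (hy : f y ∈ tightClosure p (I.map f)) :
    y ∈ tightClosure p I := by
  let := f.toAlgebra
  have : Module.Finite D S := hfin
  have : Module.IsTorsionFree D S := .of_smul_eq_zero fun r s h => by
    rw [Algebra.smul_def, mul_eq_zero] at h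
    exact h.imp_left ((injective_iff_map_eq_zero f).1 hinj r)
  obtain ⟨d, hd, N, hN⟩ := hy
  obtain ⟨r, hr, hrd⟩ :=
    exists_ne_zero_algebraMap_mem_span_singleton (D := D) (mem_primeComplement_iff_ne_zero.1 hd)
  obtain ⟨φ, hφ⟩ :=
    Module.exists_dual_apply_ne_zero_of_isTorsionFree (D := D) (one_ne_zero (α := S))
  refine ⟨r * φ 1, mem_primeComplement_iff_ne_zero.2 (mul_ne_zero hr hφ), N, fun e he => ?_⟩
  obtain ⟨s, hs⟩ := mem_span_singleton'.1 hrd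
  have hmem : algebraMap D S (r * y ^ p ^ e) ∈ (I.frobeniusPower (p ^ e)).map f := by
    rw [← map_frobeniusPower hp hS, map_mul, map_pow, ← hs, mul_assoc]
    exact mul_mem_left _ _ (hN e he)
  have := φ.apply_mem_of_mem_map_algebraMap hmem
  rwa [Algebra.algebraMap_eq_smul_one, map_smul, smul_eq_mul, mul_right_comm] at this

theorem exists_mk_mul_mem_tightClosure_of_disjoint (hp : p.Prime) (hA : (p : A) = 0)
    (U : Submonoid A) {P : Ideal A} (hP : P ∈ minimalPrimes A) (hUP : Disjoint (U : Set A) P)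
    {S : Type*} [CommRing S] [IsDomain S] (f : A ⧸ P →+* S) (hinj : Function.Injective f)
    (hfin : f.Finite) (hS : TightClosureCommutesWithLocalization p S) {I : Ideal A} {z : A}
    (hz : algebraMap A (Localization U) z ∈
      tightClosure p (I.map (algebraMap A (Localization U)))) :
    ∃ v ∈ U, Ideal.Quotient.mk P (v * z) ∈ tightClosure p (I.map (Ideal.Quotient.mk P)) := by
  have := hP.1.1
  set g := f.comp (Ideal.Quotient.mk P)
  have hSp : (p : S) = 0 := by rw [← map_natCast g, hA, map_zero]
  have hker : RingHom.ker g = P := by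
    rw [RingHom.ker_comp_of_injective _ hinj, Ideal.mk_ker]
  set US := U.map g
  have hUS : US ≤ nonZeroDivisors S := by
    rintro _ ⟨v, hv, rfl⟩
    refine mem_nonZeroDivisors_of_ne_zero fun h0 => Set.disjoint_left.1 hUP hv ?_
    exact hker ▸ RingHom.mem_ker.2 h0
  have := IsLocalization.isDomain_localization hUS
  let ψ := IsLocalization.map (M := U) (S := Localization U) (Localization US) g
    (Submonoid.le_comap_map U)
  have hψ : RingHom.ker ψ ∈ minimalPrimes (Localization U) := by
    rw [IsLocalization.mem_minimalPrimes_iff_comap U, RingHom.comap_ker, IsLocalization.map_comp,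
      RingHom.ker_comp_of_injective _ (IsLocalization.injective _ hUS), hker]
    exact hP
  have hgz :=
    map_mem_tightClosure ψ (fun _ => map_mem_primeComplement_of_ker_mem_minimalPrimes ψ hψ) hz
  rw [Ideal.map_map, IsLocalization.map_comp, ← Ideal.map_map, IsLocalization.map_eq] at hgz
  obtain ⟨_, ⟨v, hv, rfl⟩, hvz⟩ := hS.exists_mul_mem_tightClosure hp hSp US hgz
  refine ⟨v, hv, mem_tightClosure_of_map_mem hp hSp f hinj hfin ?_⟩
  rw [← map_mul] at hvz
  rwa [Ideal.map_map]

theorem exists_mk_mul_mem_tightClosure (hp : p.Prime) (hA : (p : A) = 0)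
    (U : Submonoid A) {P : Ideal A} (hP : P ∈ minimalPrimes A)
    {S : Type*} [CommRing S] [IsDomain S] (f : A ⧸ P →+* S) (hinj : Function.Injective f)
    (hfin : f.Finite) (hS : TightClosureCommutesWithLocalization p S) {I : Ideal A} {z : A}
    (hz : algebraMap A (Localization U) z ∈
      tightClosure p (I.map (algebraMap A (Localization U)))) :
    ∃ v ∈ U, Ideal.Quotient.mk P (v * z) ∈ tightClosure p (I.map (Ideal.Quotient.mk P)) := by
  by_cases hUP : Disjoint (U : Set A) P
  · exact exists_mk_mul_mem_tightClosure_of_disjoint hp hA U hP hUP f hinj hfin hS hz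
  · obtain ⟨v, hvU, hvP⟩ := Set.not_disjoint_iff.1 hUP
    refine ⟨v, hvU, ?_⟩
    rw [Ideal.Quotient.eq_zero_iff_mem.2 (mul_mem_right _ _ hvP)]
    exact zero_mem_tightClosure hp _

theorem exists_mul_mem_tightClosure_of_forall_minimalPrimes [IsNoetherianRing A]
    (hp : p.Prime) (hA : (p : A) = 0) (U : Submonoid A) {I : Ideal A} {z : A}
    (hz : ∀ P ∈ minimalPrimes A,
      ∃ v ∈ U, Ideal.Quotient.mk P (v * z) ∈ tightClosure p (I.map (Ideal.Quotient.mk P))) :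
    ∃ v ∈ U, v * z ∈ tightClosure p I := by
  classical
  choose! v hvU hvz using hz
  set s := (minimalPrimes.finite_of_isNoetherianRing A).toFinset
  have hs : ∀ {P}, P ∈ s ↔ P ∈ minimalPrimes A := Set.Finite.mem_toFinset _
  refine ⟨∏ P ∈ s, v P, prod_mem fun P hP => hvU P (hs.1 hP),
    mem_tightClosure_of_forall_minimalPrimes hp hA fun P hP => ?_⟩
  rw [← Finset.mul_prod_erase s v (hs.2 hP), mul_comm (v P), mul_assoc, map_mul]
  exact mul_mem_tightClosure _ (hvz P hP)

/-- **Theorem.** If for each minimal prime `P` of `R`, the domain `R/P` has a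
module-finite integral extension domain in which tight closure commutes with
localization, then tight closure commutes with localization in `R`. -/
theorem tightClosure_commutes_localization_of_quotients_have_finite_extension
    (p : ℕ) [Fact p.Prime] (R : Type) [CommRing R] [IsNoetherianRing R] [CharP R p]
    (h : ∀ P ∈ minimalPrimes R,
      ∃ (S : Type) (_ : CommRing S) (_ : IsDomain S) (f : (R ⧸ P) →+* S),
        Function.Injective f ∧ f.Finite ∧ f.IsIntegral ∧
          TightClosureCommutesWithLocalization p S) :
    TightClosureCommutesWithLocalization p R := by
  have hp : p.Prime := Fact.out
  have hR : (p : R) = 0 := CharP.cast_eq_zero R p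
  intro I U
  refine subset_antisymm (coe_map_span_tightClosure_subset U _ hp hR I) fun ζ hζ => ?_
  obtain ⟨⟨x, u⟩, hxu⟩ := IsLocalization.surj U ζ
  have hx : algebraMap R (Localization U) x ∈ tightClosure p (I.map (algebraMap R _)) := by
    rw [← hxu, mul_comm]
    exact mul_mem_tightClosure _ hζ
  obtain ⟨v, hvU, hvx⟩ := exists_mul_mem_tightClosure_of_forall_minimalPrimes hp hR U
    fun P hP => by
      obtain ⟨S, _, _, f, hinj, hfin, -, hS⟩ := h P hP
      exact exists_mk_mul_mem_tightClosure hp hR U hP f hinj hfin hS hx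
  rw [SetLike.mem_coe, ← mul_unit_mem_iff_mem _ (IsLocalization.map_units _ u), hxu,
    IsLocalization.algebraMap_mem_map_algebraMap_iff U]
  exact ⟨v, hvU, subset_span hvx⟩
end

section
/- Let R be a Noetherian integral domain of prime characteristic p and let S be an integral extension domain of R that is module-finite over R. Then for any ideal I of R, the contraction of the tight closure of the extended ideal is contained in the tight closure of I: (I·S)* ∩ R ⊆ I*. -/
lemma aux_minimalPrimes_domain {R : Type*} [CommRing R] [IsDomain R] :
    minimalPrimes R = {⊥} := by
  have hbot : (⊥ : Ideal R).IsPrime := Ideal.bot_prime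
  ext P
  constructor
  · rintro hP
    have h := hP.2 (y := ⊥) ⟨hbot, le_rfl⟩ bot_le
    exact le_bot_iff.mp h
  · rintro rfl
    exact ⟨⟨hbot, le_rfl⟩, fun y _ _ => bot_le⟩

lemma aux_mem_primeComplement {R : Type*} [CommRing R] [IsDomain R] {c : R} (hc : c ≠ 0) :
    c ∈ primeComplement R := by
  intro P hP
  rw [aux_minimalPrimes_domain] at hP
  rw [Set.mem_singleton_iff] at hP
  subst hP
  simpa using hc

lemma aux_ne_zero {R : Type*} [CommRing R] [IsDomain R] {c : R}
    (hc : c ∈ primeComplement R) : c ≠ 0 := by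
  intro h
  exact hc ⊥ (by rw [aux_minimalPrimes_domain]; rfl) (by simp [h])

/-- Frobenius powers of extended ideals are contained in extensions of Frobenius powers. -/
lemma aux_frobeniusPower_map_le (p : ℕ) [Fact p.Prime] {R S : Type*} [CommRing R]
    [CommRing S] [CharP S p] (f : R →+* S) (I : Ideal R) (e : ℕ) :
    (I.map f).frobeniusPower (p ^ e) ≤ (I.frobeniusPower (p ^ e)).map f := by
  rw [Ideal.frobeniusPower, Ideal.span_le]
  rintro _ ⟨x, hx, rfl⟩
  simp only [SetLike.mem_coe] at hx ⊢
  have hx' : x ∈ Ideal.span (f '' (I : Set R)) := hx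
  clear hx
  induction hx' using Submodule.span_induction with
  | mem x h =>
      obtain ⟨a, ha, rfl⟩ := h
      rw [← map_pow]
      exact Ideal.mem_map_of_mem f (Ideal.subset_span ⟨a, ha, rfl⟩)
  | zero =>
      rw [zero_pow (pow_ne_zero e (Fact.out (p := p.Prime)).ne_zero)]
      exact zero_mem _
  | add x y hx hy ihx ihy =>
      rw [add_pow_char_pow]
      exact add_mem ihx ihy
  | smul s x hx ih =>
      rw [smul_eq_mul, mul_pow]
      exact Ideal.mul_mem_left _ _ ih

/-- Over domains, a module-finite extension admits a linear functional not vanishing at a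
given nonzero element. -/
lemma aux_exists_functional {R S : Type*} [CommRing R] [IsDomain R] [CommRing S] [IsDomain S]
    [Algebra R S] (hinj : Function.Injective (algebraMap R S)) [Module.Finite R S]
    {c : S} (hc0 : c ≠ 0) : ∃ θ : S →ₗ[R] R, θ c ≠ 0 := by
  classical
  let K := FractionRing R
  let V := LocalizedModule (nonZeroDivisors R) S
  let ι : S →ₗ[R] V := LocalizedModule.mkLinearMap (nonZeroDivisors R) S
  have hv : ι c ≠ 0 := by
    intro h
    have h' : LocalizedModule.mk c (1 : nonZeroDivisors R) =
        LocalizedModule.mk (0 : S) (1 : nonZeroDivisors R) := by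
      simpa [ι, LocalizedModule.mkLinearMap] using h
    rw [LocalizedModule.mk_eq] at h'
    obtain ⟨u, hu⟩ := h'
    simp only [one_smul, smul_zero] at hu
    have hu' : (u : R) • c = 0 := hu
    rw [algebra_compatible_smul S (u : R) c] at hu'
    have : algebraMap R S (u : R) ≠ 0 := fun h0 => nonZeroDivisors.coe_ne_zero u (hinj (by simpa using h0))
    exact (mul_ne_zero this hc0) (by simpa [Algebra.smul_def] using hu')
  -- a K-linear functional not vanishing at ι c
  obtain ⟨f, hf⟩ : ∃ f : Module.Dual K V, f (ι c) ≠ 0 := by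
    by_contra h
    push_neg at h
    exact hv ((Module.forall_dual_apply_eq_zero_iff K (ι c)).mp h)
  let g : S →ₗ[R] K := (f.restrictScalars R).comp ι
  have hgc : g c ≠ 0 := hf
  -- clear denominators over a finite generating set
  obtain ⟨t, ht⟩ : ∃ t : Finset S, Submodule.span R (t : Set S) = ⊤ :=
    Module.Finite.fg_top (R := R) (M := S)
  obtain ⟨b, hb⟩ := IsLocalization.exist_integer_multiples (nonZeroDivisors R) t (fun x : S => g x)
  let h : S →ₗ[R] K := (b : R) • g
  have hW : ∀ x : S, h x ∈ LinearMap.range (Algebra.linearMap R K) := by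
    intro x
    have hx : x ∈ Submodule.span R (t : Set S) := ht ▸ Submodule.mem_top
    have : h x ∈ Submodule.map h (Submodule.span R (t : Set S)) :=
      Submodule.mem_map_of_mem hx
    rw [Submodule.map_span] at this
    refine Submodule.span_le.mpr ?_ this
    rintro _ ⟨y, hy, rfl⟩
    obtain ⟨r, hr⟩ := hb y hy
    exact ⟨r, hr⟩
  have hKinj : Function.Injective (Algebra.linearMap R K) :=
    IsFractionRing.injective R K
  let e : R ≃ₗ[R] LinearMap.range (Algebra.linearMap R K) :=
    LinearEquiv.ofInjective (Algebra.linearMap R K) hKinj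
  refine ⟨e.symm.toLinearMap.comp (h.codRestrict _ hW), ?_⟩
  intro h0
  have hbne : algebraMap R K (b : R) ≠ 0 := fun hh =>
    nonZeroDivisors.coe_ne_zero b (IsFractionRing.injective R K (by simpa using hh))
  have hhc : h c ≠ 0 := by
    have : h c = algebraMap R K (b : R) * g c := by
      simp [h, Algebra.smul_def]
    rw [this]
    exact mul_ne_zero hbne hgc
  apply hhc
  have : (h.codRestrict _ hW) c = 0 := by
    have := congrArg e h0
    simpa [e] using this
  simpa using congrArg Subtype.val this

/-- For a module-finite integral extension of domains `R ⊆ S`, the contraction of the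
tight closure of the extended ideal is contained in the tight closure:
`(I·S)* ∩ R ⊆ I*`. -/
theorem tightClosure_map_contraction_subset
    (p : ℕ) [Fact p.Prime] (R : Type) [CommRing R] [IsDomain R] [IsNoetherianRing R]
    [CharP R p] (S : Type) [CommRing S] [IsDomain S] [Algebra R S]
    (hinj : Function.Injective (algebraMap R S)) [Module.Finite R S]
    (hint : Algebra.IsIntegral R S) (I : Ideal R) (z : R)
    (hz : algebraMap R S z ∈ tightClosure p (I.map (algebraMap R S))) :
    z ∈ tightClosure p I := by
  haveI : CharP S p := charP_of_injective_algebraMap hinj p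
  obtain ⟨c, hc, N, hcq⟩ := hz
  have hc0 : c ≠ 0 := aux_ne_zero hc
  obtain ⟨θ, hθ0⟩ := aux_exists_functional hinj hc0
  refine ⟨θ c, aux_mem_primeComplement hθ0, N, fun e he => ?_⟩
  have h1 := hcq e he
  have h2 : c * algebraMap R S z ^ p ^ e ∈
      Ideal.map (algebraMap R S) (I.frobeniusPower (p ^ e)) :=
    aux_frobeniusPower_map_le p (algebraMap R S) I e h1
  have h3 : c * algebraMap R S z ^ p ^ e ∈
      (I.frobeniusPower (p ^ e)) • (⊤ : Submodule R S) := by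
    rw [Ideal.smul_top_eq_map]
    exact h2
  have h4 : ∀ x ∈ (I.frobeniusPower (p ^ e)) • (⊤ : Submodule R S),
      θ x ∈ I.frobeniusPower (p ^ e) := by
    intro x hx
    refine Submodule.smul_induction_on hx ?_ ?_
    · intro r hr s _
      rw [map_smul]
      exact Ideal.mul_mem_right _ _ hr
    · intro x y hx hy
      rw [map_add]
      exact add_mem hx hy
  have h5 := h4 _ h3
  have h6 : c * algebraMap R S z ^ p ^ e = (z ^ p ^ e) • c := by
    rw [Algebra.smul_def, map_pow]
    ring
  rw [h6, map_smul, smul_eq_mul] at h5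
  rwa [mul_comm] at h5
end
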